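/- arXiv:1305.4546 — 2 statements merged into one kernel-verified Lean document; each statement's English description precedes it below -/
import Mathlib

section
/- For words u, v ∈ {x,y}*: u = v in the semigroup P if and only if ⌊z u⌋ = ⌊z v⌋ in the Kukin Lie algebra A_P. Consequently, if P has undecidable word problem then so does A_P. -/
/-- Generators of the Kukin Lie algebra: `x, x̂, y, ŷ, z`. -/
inductive KGen : Type
  | x | xh | y | yh | z
  deriving DecidableEq

/-- Letters of the semigroup alphabet `{x, y}`, encoded by `Bool`
(`false ↦ x`, `true ↦ y`); words are lists of letters. -/
noncomputable def letterF (k : Type*) [Field k] : Bool → FreeLieAlgebra k KGen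
  | false => FreeLieAlgebra.of k KGen.x
  | true  => FreeLieAlgebra.of k KGen.y

/-- The hatted generator corresponding to a letter. -/
noncomputable def hatF (k : Type*) [Field k] : Bool → FreeLieAlgebra k KGen
  | false => FreeLieAlgebra.of k KGen.xh
  | true  => FreeLieAlgebra.of k KGen.yh

/-- The left-normed bracketing `⌊z w⌋ = [[…[[z,w₁],w₂],…],w_m]` of an element
with the letters of a word. -/
def lnb {L : Type*} [LieRing L] (f : Bool → L) : L → List Bool → L
  | z, [] => z
  | z, a :: w => lnb f ⁅z, f a⁆ w

/-- The defining relations of the Kukin Lie algebra `A_P` for a semigroup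
presentation `P = ⟨x, y ∣ uᵢ = vᵢ (i ∈ I)⟩`:
`[x̂,x] = [x̂,y] = [ŷ,x] = [ŷ,y] = 0`, `[x̂,z] = -[z,x]`, `[ŷ,z] = -[z,y]`, and
`⌊z uᵢ⌋ = ⌊z vᵢ⌋` for all `i`. -/
def kukinRels (k : Type*) [Field k] {I : Type*} (rel : I → List Bool × List Bool) :
    Set (FreeLieAlgebra k KGen) :=
  { ⁅FreeLieAlgebra.of k KGen.xh, FreeLieAlgebra.of k KGen.x⁆,
    ⁅FreeLieAlgebra.of k KGen.xh, FreeLieAlgebra.of k KGen.y⁆,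
    ⁅FreeLieAlgebra.of k KGen.yh, FreeLieAlgebra.of k KGen.x⁆,
    ⁅FreeLieAlgebra.of k KGen.yh, FreeLieAlgebra.of k KGen.y⁆,
    ⁅FreeLieAlgebra.of k KGen.xh, FreeLieAlgebra.of k KGen.z⁆ +
      ⁅FreeLieAlgebra.of k KGen.z, FreeLieAlgebra.of k KGen.x⁆,
    ⁅FreeLieAlgebra.of k KGen.yh, FreeLieAlgebra.of k KGen.z⁆ +
      ⁅FreeLieAlgebra.of k KGen.z, FreeLieAlgebra.of k KGen.y⁆ } ∪
  { p | ∃ i : I, p = lnb (letterF k) (FreeLieAlgebra.of k KGen.z) (rel i).1 -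
                  lnb (letterF k) (FreeLieAlgebra.of k KGen.z) (rel i).2 }

/-- The Lie ideal generated by the Kukin relations. -/
noncomputable def kukinIdeal (k : Type*) [Field k] {I : Type*}
    (rel : I → List Bool × List Bool) : LieIdeal k (FreeLieAlgebra k KGen) :=
  LieSubmodule.lieSpan k _ (kukinRels k rel)

/-- The Kukin Lie algebra `A_P`. -/
abbrev KukinAlg (k : Type*) [Field k] {I : Type*} (rel : I → List Bool × List Bool) :=
  FreeLieAlgebra k KGen ⧸ kukinIdeal k rel

/-- The canonical image of an element of the free Lie algebra in `A_P`. -/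
noncomputable def kmk (k : Type*) [Field k] {I : Type*} (rel : I → List Bool × List Bool)
    (a : FreeLieAlgebra k KGen) : KukinAlg k rel :=
  LieSubmodule.Quotient.mk (N := kukinIdeal k rel) a

/-- The congruence on the free semigroup `{x,y}⁺` generated by the defining
pairs `(uᵢ, vᵢ)`: `SemigroupEq rel u v` means `u = v` holds in the semigroup
`P = ⟨x, y ∣ uᵢ = vᵢ (i ∈ I)⟩`. -/
inductive SemigroupEq {I : Type*} (rel : I → List Bool × List Bool) :
    List Bool → List Bool → Prop
  | rel (a b : List Bool) (i : I) :
      SemigroupEq rel (a ++ (rel i).1 ++ b) (a ++ (rel i).2 ++ b)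
  | refl (u : List Bool) : SemigroupEq rel u u
  | symm {u v : List Bool} : SemigroupEq rel u v → SemigroupEq rel v u
  | trans {u v w : List Bool} :
      SemigroupEq rel u v → SemigroupEq rel v w → SemigroupEq rel u w

/-! Forward direction: modulo the relations the hats commute with the letters and
`[z, x] = [z, x̂]`, so `⌊z (a w)⌋ = ⌊⌊z w⌋ â⌋`, where `â` is the reversed word `a` in hatted
letters. Rewriting `a uᵢ b` to `a vᵢ b` therefore only replaces the inner factor `⌊z uᵢ⌋` by
`⌊z vᵢ⌋`.

Backward direction: for a monoid `M` and a hom `f` from the free monoid on `{x, y}`, let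
`A_P` act on the space with basis `w₀` (`none`) and `z_m` (`some m`, `m ∈ M`): a letter `c` by
`z_m ↦ -z_{m f(c)}` and its hat by `z_m ↦ -z_{f(c) m}`, both killing `w₀`, and `z` by
`w₀ ↦ z_1`, killing the `z_m`.
The defining relations hold as soon as `f` identifies each `uᵢ` with `vᵢ`, and `⌊z u⌋` acts as
`w₀ ↦ z_{f(u)}`. Taking for `f` the quotient map onto `P` recovers the class of `u`. -/

section LeftNormed

variable {L : Type*} [LieRing L]

theorem lnb_append (f : Bool → L) (e : L) (s t : List Bool) :
    lnb f e (s ++ t) = lnb f (lnb f e s) t := by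
  induction s generalizing e with
  | nil => rfl
  | cons c s ih => exact ih ⁅e, f c⁆

theorem map_lnb {L' : Type*} [LieRing L'] (φ : L → L') (hφ : ∀ a b, φ ⁅a, b⁆ = ⁅φ a, φ b⁆)
    (f : Bool → L) (e : L) (w : List Bool) : φ (lnb f e w) = lnb (φ ∘ f) (φ e) w := by
  induction w generalizing e with
  | nil => rfl
  | cons c w ih => simp only [lnb, ih, hφ, Function.comp_apply]

theorem lnb_lie_of_lie_eq_zero {f : Bool → L} {x : L} (hx : ∀ c, ⁅f c, x⁆ = 0) (e : L)
    (w : List Bool) : ⁅lnb f e w, x⁆ = lnb f ⁅e, x⁆ w := by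
  induction w generalizing e with
  | nil => rfl
  | cons c w ih =>
    have hswap : ⁅⁅e, f c⁆, x⁆ = ⁅⁅e, x⁆, f c⁆ := by
      rw [lie_lie, hx, lie_zero, zero_sub, lie_skew]
    simp only [lnb, ih, hswap]

variable {f g : Bool → L} {z : L}

theorem lnb_append_eq_lnb_reverse (hcomm : ∀ c d, ⁅f c, g d⁆ = 0)
    (hz : ∀ c, ⁅z, f c⁆ = ⁅z, g c⁆) (a w : List Bool) :
    lnb f z (a ++ w) = lnb g (lnb f z w) a.reverse := by
  induction a with
  | nil => rfl
  | cons c a ih =>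
    calc lnb f ⁅z, f c⁆ (a ++ w) = ⁅lnb f z (a ++ w), g c⁆ := by
          rw [hz, lnb_lie_of_lie_eq_zero (fun d => hcomm d c)]
      _ = lnb g (lnb f z w) (c :: a).reverse := by
          rw [ih, List.reverse_cons, lnb_append]; rfl

theorem SemigroupEq.lnb_eq {I : Type*} {rel : I → List Bool × List Bool}
    (hcomm : ∀ c d, ⁅f c, g d⁆ = 0) (hz : ∀ c, ⁅z, f c⁆ = ⁅z, g c⁆)
    (hrel : ∀ i, lnb f z (rel i).1 = lnb f z (rel i).2) {u v : List Bool}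
    (h : SemigroupEq rel u v) : lnb f z u = lnb f z v := by
  induction h with
  | rel a b i =>
    simp only [lnb_append _ _ (a ++ _) b, lnb_append_eq_lnb_reverse hcomm hz, hrel]
  | refl => rfl
  | symm _ ih => exact ih.symm
  | trans _ _ ih₁ ih₂ => exact ih₁.trans ih₂

end LeftNormed

namespace SemigroupEq

variable {I : Type*} {rel : I → List Bool × List Bool}

theorem append_right {u v : List Bool} (h : SemigroupEq rel u v) (w : List Bool) :
    SemigroupEq rel (u ++ w) (v ++ w) := by
  induction h with
  | rel a b i => simpa only [List.append_assoc] using SemigroupEq.rel a (b ++ w) i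
  | refl => exact .refl _
  | symm _ ih => exact ih.symm
  | trans _ _ ih₁ ih₂ => exact ih₁.trans ih₂

theorem append_left {u v : List Bool} (h : SemigroupEq rel u v) (w : List Bool) :
    SemigroupEq rel (w ++ u) (w ++ v) := by
  induction h with
  | rel a b i => simpa only [List.append_assoc] using SemigroupEq.rel (w ++ a) b i
  | refl => exact .refl _
  | symm _ ih => exact ih.symm
  | trans _ _ ih₁ ih₂ => exact ih₁.trans ih₂

variable (rel) in
def con : Con (FreeMonoid Bool) where
  r u v := SemigroupEq rel u.toList v.toList
  iseqv := ⟨fun _ => .refl _, .symm, .trans⟩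
  mul' {_ b c _} hab hcd := (hab.append_right c.toList).trans (hcd.append_left b.toList)

theorem of_rel (i : I) : SemigroupEq rel (rel i).1 (rel i).2 := by
  simpa using SemigroupEq.rel [] [] i

end SemigroupEq

section Forward

variable (k : Type*) [Field k] {I : Type*} (rel : I → List Bool × List Bool)

theorem kmk_add (a b : FreeLieAlgebra k KGen) : kmk k rel (a + b) = kmk k rel a + kmk k rel b :=
  rfl

theorem kmk_lie (a b : FreeLieAlgebra k KGen) : kmk k rel ⁅a, b⁆ = ⁅kmk k rel a, kmk k rel b⁆ :=
  rfl

theorem kmk_eq_kmk_iff (a b : FreeLieAlgebra k KGen) :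
    kmk k rel a = kmk k rel b ↔ a - b ∈ kukinIdeal k rel :=
  Submodule.Quotient.eq _

theorem kmk_eq_zero_of_mem {r : FreeLieAlgebra k KGen} (hr : r ∈ kukinRels k rel) :
    kmk k rel r = 0 :=
  (Submodule.Quotient.mk_eq_zero _).mpr (LieSubmodule.subset_lieSpan hr)

theorem kmk_letter_lie_hat (c d : Bool) :
    ⁅kmk k rel (letterF k c), kmk k rel (hatF k d)⁆ = 0 := by
  rw [← lie_skew, neg_eq_zero]
  exact kmk_eq_zero_of_mem k rel (by cases c <;> cases d <;> simp [kukinRels, letterF, hatF])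

theorem kmk_z_lie_letter (c : Bool) :
    ⁅kmk k rel (FreeLieAlgebra.of k KGen.z), kmk k rel (letterF k c)⁆ =
      ⁅kmk k rel (FreeLieAlgebra.of k KGen.z), kmk k rel (hatF k c)⁆ := by
  have h : kmk k rel (⁅hatF k c, FreeLieAlgebra.of k KGen.z⁆ +
      ⁅FreeLieAlgebra.of k KGen.z, letterF k c⁆) = 0 :=
    kmk_eq_zero_of_mem k rel (by cases c <;> simp [kukinRels, letterF, hatF])
  rw [kmk_add, kmk_lie, kmk_lie] at h
  rw [← lie_skew _ (kmk k rel (hatF k c))]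
  exact eq_neg_of_add_eq_zero_right h

theorem kmk_lnb_eq_of_semigroupEq {u v : List Bool} (h : SemigroupEq rel u v) :
    kmk k rel (lnb (letterF k) (FreeLieAlgebra.of k KGen.z) u) =
      kmk k rel (lnb (letterF k) (FreeLieAlgebra.of k KGen.z) v) := by
  have hmap := map_lnb (kmk k rel) (kmk_lie k rel) (letterF k) (FreeLieAlgebra.of k KGen.z)
  rw [hmap, hmap]
  refine h.lnb_eq (f := kmk k rel ∘ letterF k) (g := kmk k rel ∘ hatF k)
    (kmk_letter_lie_hat k rel) (kmk_z_lie_letter k rel) fun i => ?_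
  rw [← hmap, ← hmap, kmk_eq_kmk_iff]
  exact LieSubmodule.subset_lieSpan (Or.inr ⟨i, rfl⟩)

end Forward

section Model

attribute [local instance] LieRing.ofAssociativeRing

variable (k : Type*) [Field k] {M : Type*}

noncomputable def transferOp (m : M) : Module.End k (Option M →₀ k) :=
  Finsupp.lsingle (some m) ∘ₗ Finsupp.lapply none

theorem transferOp_injective : Function.Injective (transferOp k : M → _) := by
  intro m n h
  have hw₀ := LinearMap.congr_fun h (Finsupp.single none 1)
  simp only [transferOp, LinearMap.comp_apply, Finsupp.lapply_apply, Finsupp.single_eq_same,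
    Finsupp.lsingle_apply] at hw₀
  exact Option.some_injective _ (Finsupp.single_left_injective one_ne_zero hw₀)

variable [Monoid M]

noncomputable def rightMulOp (m : M) : Module.End k (Option M →₀ k) :=
  Finsupp.linearCombination k fun o => o.elim 0 fun n => -Finsupp.single (some (n * m)) 1

noncomputable def leftMulOp (m : M) : Module.End k (Option M →₀ k) :=
  Finsupp.linearCombination k fun o => o.elim 0 fun n => -Finsupp.single (some (m * n)) 1

theorem leftMulOp_lie_rightMulOp (a b : M) : ⁅leftMulOp k a, rightMulOp k b⁆ = 0 := by
  ext (_ | n) : 2 <;> simp [rightMulOp, leftMulOp, mul_assoc]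

theorem transferOp_lie_rightMulOp (m a : M) :
    ⁅transferOp k m, rightMulOp k a⁆ = transferOp k (m * a) := by
  ext (_ | n) : 2 <;> simp [rightMulOp, transferOp]

theorem leftMulOp_lie_transferOp (a m : M) :
    ⁅leftMulOp k a, transferOp k m⁆ = -transferOp k (a * m) := by
  ext (_ | n) : 2 <;> simp [leftMulOp, transferOp]

theorem leftMulOp_lie_transferOp_one_add (a : M) :
    ⁅leftMulOp k a, transferOp k (1 : M)⁆ + ⁅transferOp k (1 : M), rightMulOp k a⁆ = 0 := by
  rw [leftMulOp_lie_transferOp, transferOp_lie_rightMulOp, mul_one, one_mul]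
  exact neg_add_cancel (transferOp k a)

theorem lnb_rightMulOp_transferOp (f : FreeMonoid Bool →* M) (m : M) (w : List Bool) :
    lnb (fun c => rightMulOp k (f (.of c))) (transferOp k m) w =
      transferOp k (m * f (.ofList w)) := by
  induction w generalizing m with
  | nil => simp [lnb]
  | cons c w ih =>
    simp only [lnb, transferOp_lie_rightMulOp, ih, FreeMonoid.ofList_cons, map_mul, mul_assoc]

noncomputable def kukinRep (f : FreeMonoid Bool →* M) :
    FreeLieAlgebra k KGen →ₗ⁅k⁆ Module.End k (Option M →₀ k) :=
  FreeLieAlgebra.lift k fun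
    | KGen.x => rightMulOp k (f (.of false))
    | KGen.y => rightMulOp k (f (.of true))
    | KGen.xh => leftMulOp k (f (.of false))
    | KGen.yh => leftMulOp k (f (.of true))
    | KGen.z => transferOp k 1

variable (f : FreeMonoid Bool →* M)

theorem kukinRep_lnb (w : List Bool) :
    kukinRep k f (lnb (letterF k) (FreeLieAlgebra.of k KGen.z) w) =
      transferOp k (f (.ofList w)) := by
  have hletter : kukinRep k f ∘ letterF k = fun c => rightMulOp k (f (.of c)) := by
    ext1 (_ | _) <;> simp [kukinRep, letterF]
  rw [map_lnb _ (kukinRep k f).map_lie, hletter, kukinRep, FreeLieAlgebra.lift_of_apply,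
    lnb_rightMulOp_transferOp, one_mul]

variable {I : Type*} {rel : I → List Bool × List Bool}

theorem kukinIdeal_le_ker_kukinRep (hf : ∀ i, f (.ofList (rel i).1) = f (.ofList (rel i).2)) :
    kukinIdeal k rel ≤ (kukinRep k f).ker := by
  refine LieSubmodule.lieSpan_le.mpr ?_
  rintro r (hr | ⟨i, rfl⟩) <;> rw [SetLike.mem_coe, LieHom.mem_ker]
  · simp only [Set.mem_insert_iff, Set.mem_singleton_iff] at hr
    rcases hr with rfl | rfl | rfl | rfl | rfl | rfl <;>
      simp [kukinRep, leftMulOp_lie_rightMulOp, leftMulOp_lie_transferOp_one_add]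
  · rw [map_sub, kukinRep_lnb, kukinRep_lnb, hf, sub_self]

theorem map_ofList_eq_of_kmk_lnb_eq
    (hf : ∀ i, f (.ofList (rel i).1) = f (.ofList (rel i).2)) {u v : List Bool}
    (h : kmk k rel (lnb (letterF k) (FreeLieAlgebra.of k KGen.z) u) =
      kmk k rel (lnb (letterF k) (FreeLieAlgebra.of k KGen.z) v)) :
    f (.ofList u) = f (.ofList v) := by
  have hker := kukinIdeal_le_ker_kukinRep k f hf ((kmk_eq_kmk_iff k rel _ _).mp h)
  rw [LieHom.mem_ker, map_sub, sub_eq_zero, kukinRep_lnb, kukinRep_lnb] at hker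
  exact transferOp_injective k hker

variable (rel) in
theorem semigroupEq_of_kmk_lnb_eq {u v : List Bool}
    (h : kmk k rel (lnb (letterF k) (FreeLieAlgebra.of k KGen.z) u) =
      kmk k rel (lnb (letterF k) (FreeLieAlgebra.of k KGen.z) v)) :
    SemigroupEq rel u v :=
  (SemigroupEq.con rel).eq.mp <|
    map_ofList_eq_of_kmk_lnb_eq k (SemigroupEq.con rel).mk'
      (fun i => (SemigroupEq.con rel).eq.mpr (SemigroupEq.of_rel i)) h

end Model

theorem kukin_iff_and_undecidability_general (k : Type*) [Field k] {I : Type*}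
    (rel : I → List Bool × List Bool) :
    (∀ u v : List Bool, SemigroupEq rel u v ↔
      kmk k rel (lnb (letterF k) (FreeLieAlgebra.of k KGen.z) u) =
        kmk k rel (lnb (letterF k) (FreeLieAlgebra.of k KGen.z) v)) ∧
    ((¬ ∃ f : List Bool → List Bool → Bool,
        ∀ u v : List Bool, f u v = true ↔ SemigroupEq rel u v) →
      ¬ ∃ g : List Bool → List Bool → Bool,
        ∀ u v : List Bool, g u v = true ↔
          kmk k rel (lnb (letterF k) (FreeLieAlgebra.of k KGen.z) u) =
            kmk k rel (lnb (letterF k) (FreeLieAlgebra.of k KGen.z) v)) := by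
  have kukin : ∀ u v : List Bool, SemigroupEq rel u v ↔
      kmk k rel (lnb (letterF k) (FreeLieAlgebra.of k KGen.z) u) =
        kmk k rel (lnb (letterF k) (FreeLieAlgebra.of k KGen.z) v) :=
    fun _ _ => ⟨kmk_lnb_eq_of_semigroupEq k rel, semigroupEq_of_kmk_lnb_eq k rel⟩
  exact ⟨kukin, fun hP ⟨g, hg⟩ => hP ⟨g, fun u v => (hg u v).trans (kukin u v).symm⟩⟩

/-- Kukin's theorem: `u = v` in the semigroup `P` iff `⌊z u⌋ = ⌊z v⌋` in the
Kukin Lie algebra `A_P`. Consequently, if the word problem of `P` is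
undecidable, then so is the word problem of `A_P` (on the elements `⌊z u⌋`). -/
theorem kukin_iff_and_undecidability (k : Type*) [Field k] {I : Type*}
    (rel : I → List Bool × List Bool)
    (hrel : ∀ i : I, (rel i).1 ≠ [] ∧ (rel i).2 ≠ []) :
    (∀ u v : List Bool, SemigroupEq rel u v ↔
      kmk k rel (lnb (letterF k) (FreeLieAlgebra.of k KGen.z) u) =
        kmk k rel (lnb (letterF k) (FreeLieAlgebra.of k KGen.z) v)) ∧
    ((¬ ∃ f : List Bool → List Bool → Bool,
        ∀ u v : List Bool, f u v = true ↔ SemigroupEq rel u v) →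
      ¬ ∃ g : List Bool → List Bool → Bool,
        ∀ u v : List Bool, g u v = true ↔
          kmk k rel (lnb (letterF k) (FreeLieAlgebra.of k KGen.z) u) =
            kmk k rel (lnb (letterF k) (FreeLieAlgebra.of k KGen.z) v)) :=
  kukin_iff_and_undecidability_general k rel
end

section
/- In the Kukin Lie algebra A_P, the subalgebra generated by x̂ and ŷ commutes elementwise with the subalgebra generated by x and y: every bracket of a Lie word in {x̂, ŷ} with a Lie word in {x, y} vanishes. -/
/-! Centralizers are Lie subalgebras by the Leibniz rule, so brackets that vanish between two
generating sets vanish between the subalgebras they generate. In `A_P` the generators `x̂, ŷ`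
commute with `x, y` by the first four defining relations. -/

namespace LieSubalgebra

variable (R : Type*) {L : Type*} [CommRing R] [LieRing L] [LieAlgebra R L]

def centralizer (s : Set L) : LieSubalgebra R L where
  carrier := {b | ∀ a ∈ s, ⁅a, b⁆ = 0}
  add_mem' hb hc a ha := by rw [lie_add, hb a ha, hc a ha, add_zero]
  zero_mem' _ _ := lie_zero _
  smul_mem' t _ hb a ha := by rw [lie_smul, hb a ha, smul_zero]
  lie_mem' hb hc a ha := by rw [leibniz_lie, hb a ha, hc a ha, zero_lie, lie_zero, add_zero]

variable {R}

theorem mem_centralizer {s : Set L} {b : L} :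
    b ∈ centralizer R s ↔ ∀ a ∈ s, ⁅a, b⁆ = 0 :=
  Iff.rfl

theorem lie_eq_zero_of_mem_lieSpan {s t : Set L} (h : ∀ a ∈ s, ∀ b ∈ t, ⁅a, b⁆ = 0) :
    ∀ a ∈ lieSpan R L s, ∀ b ∈ lieSpan R L t, ⁅a, b⁆ = 0 := by
  have ht : lieSpan R L t ≤ centralizer R s :=
    lieSpan_le.2 fun b hb a ha => h a ha b hb
  have hs : lieSpan R L s ≤ centralizer R (lieSpan R L t) :=
    lieSpan_le.2 fun a ha b hb => by rw [← lie_skew, mem_centralizer.1 (ht hb) a ha, neg_zero]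
  exact fun a ha b hb => by rw [← lie_skew, mem_centralizer.1 (hs ha) b hb, neg_zero]

end LieSubalgebra

section Kukin

variable (k : Type*) [Field k] {I : Type*} (rel : I → List Bool × List Bool)

theorem kmk_eq_zero_of_mem_kukinRels {p : FreeLieAlgebra k KGen} (hp : p ∈ kukinRels k rel) :
    kmk k rel p = 0 :=
  LieSubmodule.Quotient.mk_eq_zero'.2 (LieSubmodule.subset_lieSpan hp)

theorem kmk_hat_lie_letter :
    ∀ a ∈ ({kmk k rel (FreeLieAlgebra.of k KGen.xh), kmk k rel (FreeLieAlgebra.of k KGen.yh)} :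
        Set (KukinAlg k rel)),
      ∀ b ∈ ({kmk k rel (FreeLieAlgebra.of k KGen.x), kmk k rel (FreeLieAlgebra.of k KGen.y)} :
        Set (KukinAlg k rel)), ⁅a, b⁆ = 0 := by
  rintro a (rfl | rfl) b (rfl | rfl) <;>
    exact (kmk_lie k rel _ _).symm.trans
      (kmk_eq_zero_of_mem_kukinRels k rel (Or.inl (by simp)))

end Kukin

/-- In `A_P`, the subalgebra generated by `x̂, ŷ` commutes elementwise with the
subalgebra generated by `x, y`. -/
theorem kukin_hatted_commutes (k : Type*) [Field k] {I : Type*}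
    (rel : I → List Bool × List Bool) :
    ∀ a ∈ LieSubalgebra.lieSpan k (KukinAlg k rel)
        {kmk k rel (FreeLieAlgebra.of k KGen.xh), kmk k rel (FreeLieAlgebra.of k KGen.yh)},
      ∀ b ∈ LieSubalgebra.lieSpan k (KukinAlg k rel)
        {kmk k rel (FreeLieAlgebra.of k KGen.x), kmk k rel (FreeLieAlgebra.of k KGen.y)},
        ⁅a, b⁆ = 0 :=
  LieSubalgebra.lie_eq_zero_of_mem_lieSpan (kmk_hat_lie_letter k rel)
end
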